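/- Let C be a left proper model category and f, g : X → Y two maps that become equal in the homotopy category Ho(C). Then the restriction functors f*, g* : C^Y → C^X between under-categories induce naturally isomorphic left derived functors Lf* ≅ Lg* : Ho(C^Y) → Ho(C^X). In particular, Y with structure map f and Y with structure map g are isomorphic as objects of Ho(C^X). -/

import Mathlib

/-!
Sending `U` to `Ho(C^U)` and `h : U ⟶ V` to the functor `Ho(C^V) ⥤ Ho(C^U)` induced by
restriction along `h` is only a pseudofunctor, but it becomes a functor once functors are
identified up to natural isomorphism. For a weak equivalence `w`, left properness makes the unit
`A ⟶ w^* w_! A` of the pushout–restriction adjunction a weak equivalence for cofibrant `A`, so the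
derived pushout along `w` is inverse to restriction along `w`. The functor therefore inverts weak
equivalences and factors through `Ho(C)`: if `f = g` in `Ho(C)` then `f^* ≅ g^*` on homotopy
categories, and right Kan extensions of isomorphic functors are isomorphic.
-/

open CategoryTheory Limits

/-- A model structure on a category `C`: distinguished classes of weak equivalences,
cofibrations and fibrations, subject to the usual axioms (bicompleteness is assumed via
`HasFiniteLimits`/`HasFiniteColimits` type-class hypotheses at use sites). -/
class ModelStruct (C : Type*) [Category C] where
  W : MorphismProperty C
  Cof : MorphismProperty C
  Fib : MorphismProperty C
  W_id : ∀ X : C, W (𝟙 X)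
  Cof_id : ∀ X : C, Cof (𝟙 X)
  Fib_id : ∀ X : C, Fib (𝟙 X)
  /-- two-out-of-three -/
  W_comp : ∀ {X Y Z : C} (f : X ⟶ Y) (g : Y ⟶ Z), W f → W g → W (f ≫ g)
  W_cancel_left : ∀ {X Y Z : C} (f : X ⟶ Y) (g : Y ⟶ Z), W f → W (f ≫ g) → W g
  W_cancel_right : ∀ {X Y Z : C} (f : X ⟶ Y) (g : Y ⟶ Z), W g → W (f ≫ g) → W f
  /-- the three classes are stable under retracts -/
  W_retract : ∀ {X Y X' Y' : C} (f : X ⟶ Y) (f' : X' ⟶ Y')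
    (s : Arrow.mk f ⟶ Arrow.mk f') (r : Arrow.mk f' ⟶ Arrow.mk f),
    s ≫ r = 𝟙 (Arrow.mk f) → W f' → W f
  Cof_retract : ∀ {X Y X' Y' : C} (f : X ⟶ Y) (f' : X' ⟶ Y')
    (s : Arrow.mk f ⟶ Arrow.mk f') (r : Arrow.mk f' ⟶ Arrow.mk f),
    s ≫ r = 𝟙 (Arrow.mk f) → Cof f' → Cof f
  Fib_retract : ∀ {X Y X' Y' : C} (f : X ⟶ Y) (f' : X' ⟶ Y')
    (s : Arrow.mk f ⟶ Arrow.mk f') (r : Arrow.mk f' ⟶ Arrow.mk f),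
    s ≫ r = 𝟙 (Arrow.mk f) → Fib f' → Fib f
  /-- lifting axioms -/
  lift_acof_fib : ∀ {A B X Y : C} (i : A ⟶ B) (p : X ⟶ Y),
    Cof i → W i → Fib p → HasLiftingProperty i p
  lift_cof_afib : ∀ {A B X Y : C} (i : A ⟶ B) (p : X ⟶ Y),
    Cof i → Fib p → W p → HasLiftingProperty i p
  /-- factorization axioms -/
  fact_acof_fib : ∀ {X Y : C} (f : X ⟶ Y), ∃ (Z : C) (i : X ⟶ Z) (p : Z ⟶ Y),
    Cof i ∧ W i ∧ Fib p ∧ i ≫ p = f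
  fact_cof_afib : ∀ {X Y : C} (f : X ⟶ Y), ∃ (Z : C) (i : X ⟶ Z) (p : Z ⟶ Y),
    Cof i ∧ Fib p ∧ W p ∧ i ≫ p = f

/-- Left properness: the pushout of a weak equivalence along a cofibration is a weak
equivalence. -/
def LeftProper (C : Type*) [Category C] [M : ModelStruct C] : Prop :=
  ∀ {A B A' B' : C} (w : A ⟶ A') (i : A ⟶ B) (i' : A' ⟶ B') (w' : B ⟶ B'),
    M.W w → M.Cof i → IsPushout w i i' w' → M.W w'

namespace CategoryTheory.Cat

-- Pseudofunctors into `Cat` become functors into `Quotient isoRel`.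
def isoRel : HomRel Cat := fun _ _ F G => Nonempty (F.toFunctor ≅ G.toFunctor)

instance : Congruence isoRel where
  equivalence := ⟨fun _ => ⟨Iso.refl _⟩, fun ⟨e⟩ => ⟨e.symm⟩, fun ⟨e⟩ ⟨e'⟩ => ⟨e ≪≫ e'⟩⟩
  comp_left F _ _ := fun ⟨e⟩ => ⟨Functor.isoWhiskerLeft F.toFunctor e⟩
  comp_right G := fun ⟨e⟩ => ⟨Functor.isoWhiskerRight e G.toFunctor⟩

lemma isIso_quotient_map_of_isos {A B : Cat} (F : A ⟶ B) (G : B ⟶ A)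
    (e₁ : F.toFunctor ⋙ G.toFunctor ≅ 𝟭 _) (e₂ : G.toFunctor ⋙ F.toFunctor ≅ 𝟭 _) :
    IsIso ((Quotient.functor isoRel).map F) :=
  ⟨(Quotient.functor isoRel).map G,
    ((Quotient.functor isoRel).map_comp F G).symm.trans
      ((Quotient.sound isoRel ⟨e₁⟩).trans ((Quotient.functor isoRel).map_id A)),
    ((Quotient.functor isoRel).map_comp G F).symm.trans
      ((Quotient.sound isoRel ⟨e₂⟩).trans ((Quotient.functor isoRel).map_id B))⟩

end CategoryTheory.Cat

namespace ModelStruct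

universe v u

variable {C : Type u} [Category.{v} C] [M : ModelStruct C]

section

open MorphismProperty

instance : M.Cof.IsStableUnderRetracts :=
  ⟨fun h hf => M.Cof_retract _ _ h.i h.r h.retract hf⟩

instance : HasFactorization M.Cof (M.Fib ⊓ M.W) :=
  ⟨fun f => by
    obtain ⟨Z, i, p, hi, hp, hw, fac⟩ := M.fact_cof_afib f
    exact ⟨{ Z, i, p, fac, hi, hp := ⟨hp, hw⟩ }⟩⟩

lemma llp_fib_inf_w : (M.Fib ⊓ M.W).llp = M.Cof :=
  llp_eq_of_le_llp_of_hasFactorization_of_isStableUnderRetracts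
    fun _ _ _ hi _ _ _ hp => M.lift_cof_afib _ _ hi hp.1 hp.2

instance : M.Cof.IsStableUnderCobaseChange := llp_fib_inf_w (M := M) ▸ inferInstance

instance : M.Cof.IsMultiplicative := llp_fib_inf_w (M := M) ▸ inferInstance

end

section Under

variable {U : C}

abbrev underWeq (U : C) : MorphismProperty (Under U) := M.W.inverseImage (Under.forget U)

def cofibrantWeq (U : C) : MorphismProperty (Under U) :=
  fun A B e => M.Cof A.hom ∧ M.Cof B.hom ∧ M.W e.right

lemma cofibrantWeq_isInvertedBy_Q : (cofibrantWeq U).IsInvertedBy (underWeq U).Q :=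
  fun _ _ e he => Localization.inverts (underWeq U).Q (underWeq U) e he.2.2

lemma exists_lift_of_cof_hom {A B B' : Under U} (hA : M.Cof A.hom) (p : B ⟶ B')
    (hp : (M.Fib ⊓ M.W) p.right) (a : A ⟶ B') : ∃ l : A ⟶ B, l ≫ p = a := by
  have := M.lift_cof_afib _ _ hA hp.1 hp.2
  have sq : CommSq B.hom A.hom p.right a.right := ⟨by simp⟩
  exact ⟨Under.homMk sq.lift, by ext; exact sq.fac_right⟩

noncomputable abbrev cofFactorization {X Y : C} (f : X ⟶ Y) :=
  MorphismProperty.factorizationData M.Cof (M.Fib ⊓ M.W) f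

noncomputable abbrev cofRepl (A : Under U) : Under U := Under.mk (cofFactorization A.hom).i

lemma cofRepl_hom_cof (A : Under U) : M.Cof (cofRepl A).hom := (cofFactorization A.hom).hi

noncomputable def cofReplπ (A : Under U) : cofRepl A ⟶ A :=
  Under.homMk (cofFactorization A.hom).p (cofFactorization A.hom).fac

lemma cofReplπ_right_mem (A : Under U) : (M.Fib ⊓ M.W) (cofReplπ A).right :=
  (cofFactorization A.hom).hp

lemma exists_cofReplMap {A B : Under U} (a : A ⟶ B) :
    ∃ l : cofRepl A ⟶ cofRepl B, l ≫ cofReplπ B = cofReplπ A ≫ a :=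
  exists_lift_of_cof_hom (cofRepl_hom_cof A) (cofReplπ B) (cofReplπ_right_mem B) (cofReplπ A ≫ a)

noncomputable def cofReplMap {A B : Under U} (a : A ⟶ B) : cofRepl A ⟶ cofRepl B :=
  (exists_cofReplMap a).choose

lemma cofReplMap_π {A B : Under U} (a : A ⟶ B) : cofReplMap a ≫ cofReplπ B = cofReplπ A ≫ a :=
  (exists_cofReplMap a).choose_spec

lemma w_cofReplMap_right {A B : Under U} {a : A ⟶ B} (ha : M.W a.right) :
    M.W (cofReplMap a).right := by
  have h := congrArg CommaMorphism.right (cofReplMap_π a)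
  simp only [Under.comp_right] at h
  refine M.W_cancel_right _ _ (cofReplπ_right_mem B).2 ?_
  rw [h]
  exact M.W_comp _ _ (cofReplπ_right_mem A).2 ha

variable [HasFiniteColimits C]

-- `pushout A.hom A.hom` is `A ⊔ A` in `Under U`; the cylinder factors its fold map.
noncomputable abbrev cylFact (A : Under U) := cofFactorization (pushout.codiagonal A.hom)

noncomputable abbrev cyl (A : Under U) : Under U :=
  Under.mk (A.hom ≫ pushout.inl _ _ ≫ (cylFact A).i)

noncomputable def cylι₀ (A : Under U) : A ⟶ cyl A :=
  Under.homMk (pushout.inl _ _ ≫ (cylFact A).i)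

noncomputable def cylι₁ (A : Under U) : A ⟶ cyl A :=
  Under.homMk (pushout.inr _ _ ≫ (cylFact A).i) (by
    simp [cyl, pushout.condition_assoc])

noncomputable def cylσ (A : Under U) : cyl A ⟶ A :=
  Under.homMk (cylFact A).p (by simp [cyl])

@[simp]
lemma cylι₀_σ (A : Under U) : cylι₀ A ≫ cylσ A = 𝟙 A := by
  ext; simp [cylι₀, cylσ]

@[simp]
lemma cylι₁_σ (A : Under U) : cylι₁ A ≫ cylσ A = 𝟙 A := by
  ext; simp [cylι₁, cylσ]

lemma cylσ_mem {A : Under U} (hA : M.Cof A.hom) : cofibrantWeq U (cylσ A) := by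
  have hinl : M.Cof (pushout.inl A.hom A.hom) :=
    M.Cof.of_isPushout (IsPushout.of_hasPushout A.hom A.hom) hA
  exact ⟨M.Cof.comp_mem _ _ hA (M.Cof.comp_mem _ _ hinl (cylFact A).hi), hA,
    (cylFact A).hp.2⟩

lemma exists_cyl_homotopy {A B B' : Under U} (p : B ⟶ B') (hp : (M.Fib ⊓ M.W) p.right)
    {l₀ l₁ : A ⟶ B} (h : l₀ ≫ p = l₁ ≫ p) :
    ∃ H : cyl A ⟶ B, cylι₀ A ≫ H = l₀ ∧ cylι₁ A ≫ H = l₁ := by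
  have := M.lift_cof_afib _ _ (cylFact A).hi hp.1 hp.2
  have hr := congrArg CommaMorphism.right h
  simp only [Under.comp_right] at hr
  have sq : CommSq (pushout.desc l₀.right l₁.right (by simp)) (cylFact A).i p.right
      ((cylFact A).p ≫ l₀.right ≫ p.right) :=
    ⟨pushout.hom_ext (by simp [pushout.inl_desc_assoc]) (by simp [pushout.inr_desc_assoc, hr])⟩
  refine ⟨Under.homMk sq.lift (by simp [pushout.inl_desc]), ?_, ?_⟩ <;>
    ext <;> simp [cylι₀, cylι₁, pushout.inl_desc, pushout.inr_desc]

-- Two lifts along a trivial fibration are left homotopic through `cyl A`.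
lemma map_eq_of_comp_eq {E : Type*} [Category E] {T : Under U ⥤ E}
    (hT : (cofibrantWeq U).IsInvertedBy T) {A B B' : Under U} (hA : M.Cof A.hom)
    (p : B ⟶ B') (hp : (M.Fib ⊓ M.W) p.right) {l₀ l₁ : A ⟶ B} (h : l₀ ≫ p = l₁ ≫ p) :
    T.map l₀ = T.map l₁ := by
  obtain ⟨H, rfl, rfl⟩ := exists_cyl_homotopy p hp h
  have := hT _ (cylσ_mem hA)
  have hι : T.map (cylι₀ A) = T.map (cylι₁ A) := by
    simp [← cancel_mono (T.map (cylσ A)), ← T.map_comp]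
  simp only [T.map_comp, hι]

variable {E : Type*} [Category E]

-- Functorial because `T` identifies lifts along trivial fibrations (`map_eq_of_comp_eq`).
noncomputable def cofReplComp (T : Under U ⥤ E) (hT : (cofibrantWeq U).IsInvertedBy T) :
    Under U ⥤ E where
  obj A := T.obj (cofRepl A)
  map a := T.map (cofReplMap a)
  map_id A := by
    rw [map_eq_of_comp_eq hT (cofRepl_hom_cof A) _ (cofReplπ_right_mem A)
      (l₁ := 𝟙 _) (by simp [cofReplMap_π]), T.map_id]
  map_comp a b := by
    rw [← T.map_comp]
    exact map_eq_of_comp_eq hT (cofRepl_hom_cof _) _ (cofReplπ_right_mem _)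
      (by rw [Category.assoc, cofReplMap_π, cofReplMap_π b, reassoc_of% cofReplMap_π a])

noncomputable def cofReplCompπ (T : Under U ⥤ E) (hT : (cofibrantWeq U).IsInvertedBy T) :
    cofReplComp T hT ⟶ T where
  app A := T.map (cofReplπ A)
  naturality _ _ a := by simp only [cofReplComp, ← T.map_comp, cofReplMap_π]

noncomputable def cofReplCompMap {T T' : Under U ⥤ E} {hT : (cofibrantWeq U).IsInvertedBy T}
    {hT' : (cofibrantWeq U).IsInvertedBy T'} (θ : T ⟶ T') :
    cofReplComp T hT ⟶ cofReplComp T' hT' where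
  app A := θ.app (cofRepl A)
  naturality _ _ a := θ.naturality (cofReplMap a)

lemma isIso_cofReplCompMap {T T' : Under U ⥤ E} {hT : (cofibrantWeq U).IsInvertedBy T}
    {hT' : (cofibrantWeq U).IsInvertedBy T'} (θ : T ⟶ T')
    (hθ : ∀ A : Under U, M.Cof A.hom → IsIso (θ.app A)) :
    IsIso (cofReplCompMap (hT := hT) (hT' := hT') θ) :=
  (NatTrans.isIso_iff_isIso_app _).2 fun A => hθ (cofRepl A) (cofRepl_hom_cof A)

lemma underWeq_isInvertedBy_cofReplComp (T : Under U ⥤ E)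
    (hT : (cofibrantWeq U).IsInvertedBy T) : (underWeq U).IsInvertedBy (cofReplComp T hT) :=
  fun _ _ _ ha => hT _ ⟨cofRepl_hom_cof _, cofRepl_hom_cof _, w_cofReplMap_right ha⟩

end Under

section Localization

variable {U V : C}

noncomputable def hoMap (h : U ⟶ V) :
    (underWeq V).Localization ⥤ (underWeq U).Localization :=
  Localization.Construction.lift (Under.map h ⋙ (underWeq U).Q)
    fun _ _ e he => Localization.inverts (underWeq U).Q (underWeq U) ((Under.map h).map e) he

noncomputable instance (h : U ⟶ V) : Localization.Lifting (underWeq V).Q (underWeq V)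
    (Under.map h ⋙ (underWeq U).Q) (hoMap h) :=
  Localization.liftingConstructionLift _ _

variable [HasFiniteColimits C]

lemma w_unit_mapPushoutAdj_right (hproper : LeftProper C) {w : U ⟶ V} (hw : M.W w)
    {A : Under U} (hA : M.Cof A.hom) : M.W ((Under.mapPushoutAdj w).unit.app A).right := by
  rw [Under.mapPushoutAdj_unit_app]
  exact hproper w A.hom _ _ hw hA (IsPushout.of_hasPushout A.hom w).flip

lemma w_pushout_map_right (hproper : LeftProper C) {w : U ⟶ V} (hw : M.W w)
    {A B : Under U} {e : A ⟶ B} (he : cofibrantWeq U e) :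
    M.W ((Under.pushout w).map e).right := by
  have h := congrArg CommaMorphism.right ((Under.mapPushoutAdj w).unit.naturality e)
  simp only [Under.comp_right, Functor.id_map, Functor.comp_map, Under.map_map_right] at h
  have hcomp := M.W_comp _ _ he.2.2 (w_unit_mapPushoutAdj_right hproper hw he.2.1)
  rw [h] at hcomp
  exact M.W_cancel_left _ _ (w_unit_mapPushoutAdj_right hproper hw he.1) hcomp

lemma w_pushout_map_cofReplπ_comp_counit_right (hproper : LeftProper C) {w : U ⟶ V}
    (hw : M.W w) (B : Under V) :
    M.W ((Under.pushout w).map (cofReplπ ((Under.map w).obj B)) ≫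
      (Under.mapPushoutAdj w).counit.app B).right := by
  have h := ((Under.mapPushoutAdj w).homEquiv _ _).apply_symm_apply (cofReplπ ((Under.map w).obj B))
  rw [Adjunction.homEquiv_unit, Adjunction.homEquiv_counit] at h
  have hπ := (cofReplπ_right_mem ((Under.map w).obj B)).2
  rw [← h] at hπ
  exact M.W_cancel_left _ _ (w_unit_mapPushoutAdj_right hproper hw (cofRepl_hom_cof _)) hπ

lemma cofibrantWeq_isInvertedBy_pushout_comp_Q (hproper : LeftProper C) {w : U ⟶ V}
    (hw : M.W w) : (cofibrantWeq U).IsInvertedBy (Under.pushout w ⋙ (underWeq V).Q) :=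
  fun _ _ e he =>
    Localization.inverts (underWeq V).Q (underWeq V) ((Under.pushout w).map e)
      (w_pushout_map_right hproper hw he)

-- The left derived functor of pushout along `w`.
noncomputable def hoPushout (hproper : LeftProper C) {w : U ⟶ V} (hw : M.W w) :
    (underWeq U).Localization ⥤ (underWeq V).Localization :=
  Localization.Construction.lift _
    (underWeq_isInvertedBy_cofReplComp _ (cofibrantWeq_isInvertedBy_pushout_comp_Q hproper hw))

noncomputable instance (hproper : LeftProper C) {w : U ⟶ V} (hw : M.W w) :
    Localization.Lifting (underWeq U).Q (underWeq U)
      (cofReplComp _ (cofibrantWeq_isInvertedBy_pushout_comp_Q hproper hw))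
      (hoPushout hproper hw) :=
  Localization.liftingConstructionLift _ _

noncomputable def hoMapCompHoPushoutIso (hproper : LeftProper C) {w : U ⟶ V} (hw : M.W w) :
    hoMap w ⋙ hoPushout hproper hw ≅ 𝟭 _ :=
  let hT := cofibrantWeq_isInvertedBy_pushout_comp_Q hproper hw
  let δ : Under.map w ⋙ cofReplComp _ hT ⟶ (underWeq V).Q :=
    Functor.whiskerLeft (Under.map w) (cofReplCompπ _ hT) ≫
      Functor.whiskerRight (Under.mapPushoutAdj w).counit (underWeq V).Q
  have : IsIso δ := (NatTrans.isIso_iff_isIso_app δ).2 fun B => by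
    change IsIso ((underWeq V).Q.map _ ≫ (underWeq V).Q.map _)
    rw [← Functor.map_comp]
    exact Localization.inverts (underWeq V).Q (underWeq V) _
      (w_pushout_map_cofReplπ_comp_counit_right hproper hw B)
  letI : Localization.Lifting (underWeq V).Q (underWeq V) (Under.map w ⋙ cofReplComp _ hT)
      (hoMap w ⋙ hoPushout hproper hw) :=
    ⟨Functor.isoWhiskerRight (Localization.Lifting.iso (underWeq V).Q (underWeq V)
        (Under.map w ⋙ (underWeq U).Q) (hoMap w)) (hoPushout hproper hw) ≪≫
      Functor.isoWhiskerLeft (Under.map w) (Localization.Lifting.iso (underWeq U).Q (underWeq U)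
        (cofReplComp _ hT) (hoPushout hproper hw))⟩
  Localization.liftNatIso (underWeq V).Q (underWeq V) _ _ _ _ (asIso δ)

noncomputable def hoPushoutCompHoMapIso (hproper : LeftProper C) {w : U ⟶ V} (hw : M.W w) :
    hoPushout hproper hw ⋙ hoMap w ≅ 𝟭 _ :=
  let hT := cofibrantWeq_isInvertedBy_pushout_comp_Q hproper hw
  let S := Under.pushout w ⋙ Under.map w ⋙ (underWeq U).Q
  have hS : (cofibrantWeq U).IsInvertedBy S := fun _ _ e he =>
    Localization.inverts (underWeq U).Q (underWeq U) ((Under.map w).map ((Under.pushout w).map e))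
      (w_pushout_map_right hproper hw he)
  let e₁ : cofReplComp _ hT ⋙ hoMap w ⟶ cofReplComp S hS :=
    cofReplCompMap (T := (Under.pushout w ⋙ (underWeq V).Q) ⋙ hoMap w) (hT := hT.of_comp _ _ _)
      (Functor.whiskerLeft (Under.pushout w) (Localization.Lifting.iso (underWeq V).Q (underWeq V)
        (Under.map w ⋙ (underWeq U).Q) (hoMap w)).hom)
  let e₂ : cofReplComp (underWeq U).Q cofibrantWeq_isInvertedBy_Q ⟶ cofReplComp S hS :=
    cofReplCompMap (Functor.whiskerRight (Under.mapPushoutAdj w).unit (underWeq U).Q)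
  have : IsIso e₁ := isIso_cofReplCompMap (T := (Under.pushout w ⋙ (underWeq V).Q) ⋙ hoMap w) _
    fun _ _ => inferInstance
  have : IsIso e₂ := isIso_cofReplCompMap _ fun _ hA =>
    Localization.inverts (underWeq U).Q (underWeq U) _ (w_unit_mapPushoutAdj_right hproper hw hA)
  have : IsIso (cofReplCompπ (underWeq U).Q cofibrantWeq_isInvertedBy_Q) :=
    (NatTrans.isIso_iff_isIso_app _).2 fun A =>
      Localization.inverts (underWeq U).Q (underWeq U) _ (cofReplπ_right_mem A).2
  letI : Localization.Lifting (underWeq U).Q (underWeq U) (cofReplComp S hS)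
      (hoPushout hproper hw ⋙ hoMap w) :=
    Localization.Lifting.ofIsos (underWeq U).Q (underWeq U) (asIso e₁) (Iso.refl _)
  Localization.liftNatIso (underWeq U).Q (underWeq U) _ _ _ _
    ((asIso e₂).symm ≪≫ asIso (cofReplCompπ (underWeq U).Q _))

end Localization

noncomputable def hoMapIdIso (U : C) : hoMap (𝟙 U) ≅ 𝟭 _ :=
  Localization.liftNatIso (underWeq U).Q (underWeq U) (Under.map (𝟙 U) ⋙ (underWeq U).Q) _ _ _
    (Functor.isoWhiskerRight (Under.mapId U) _ ≪≫ Functor.leftUnitor _)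

noncomputable def hoMapCompIso {U V W : C} (h : U ⟶ V) (k : V ⟶ W) :
    hoMap (h ≫ k) ≅ hoMap k ⋙ hoMap h :=
  letI : Localization.Lifting (underWeq W).Q (underWeq W)
      ((Under.map k ⋙ Under.map h) ⋙ (underWeq U).Q) (hoMap k ⋙ hoMap h) :=
    ⟨Functor.isoWhiskerRight (Localization.Lifting.iso (underWeq W).Q (underWeq W)
        (Under.map k ⋙ (underWeq V).Q) (hoMap k)) (hoMap h) ≪≫
      Functor.isoWhiskerLeft (Under.map k) (Localization.Lifting.iso (underWeq V).Q (underWeq V)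
        (Under.map h ⋙ (underWeq U).Q) (hoMap h))⟩
  Localization.liftNatIso (underWeq W).Q (underWeq W) (Under.map (h ≫ k) ⋙ (underWeq U).Q) _ _ _
    (Functor.isoWhiskerRight (Under.mapComp h k) _)

variable (C) in
noncomputable def hoUnder : C ⥤ (Quotient Cat.isoRel)ᵒᵖ where
  obj U := Opposite.op ⟨Cat.of (underWeq U).Localization⟩
  map h := Quiver.Hom.op ((Quotient.functor _).map (hoMap h).toCatHom)
  map_id U := congrArg Quiver.Hom.op
    ((CategoryTheory.Quotient.sound _ ⟨hoMapIdIso U⟩).trans ((Quotient.functor _).map_id _))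
  map_comp h k := congrArg Quiver.Hom.op
    ((CategoryTheory.Quotient.sound _ ⟨hoMapCompIso h k⟩).trans ((Quotient.functor _).map_comp _ _))

lemma w_isInvertedBy_hoUnder [HasFiniteColimits C] (hproper : LeftProper C) :
    M.W.IsInvertedBy (hoUnder C) := fun _ _ w hw => by
  have := Cat.isIso_quotient_map_of_isos (hoMap w).toCatHom (hoPushout hproper hw).toCatHom
    (hoMapCompHoPushoutIso hproper hw) (hoPushoutCompHoMapIso hproper hw)
  exact isIso_op _

lemma nonempty_iso_of_Q_map_eq [HasFiniteColimits C] (hproper : LeftProper C) {X Y : C}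
    {f g : X ⟶ Y} (hfg : M.W.Q.map f = M.W.Q.map g) :
    Nonempty (Under.map f ⋙ (underWeq X).Q ≅ Under.map g ⋙ (underWeq X).Q) := by
  have h := AreEqualizedByLocalization.map_eq_of_isInvertedBy hfg (hoUnder C)
    (w_isInvertedBy_hoUnder hproper)
  obtain ⟨e⟩ := (Quotient.functor_map_eq_iff _ _ _).mp (Quiver.Hom.op_inj h)
  exact ⟨(Localization.Lifting.iso (underWeq Y).Q (underWeq Y) _ (hoMap f)).symm ≪≫
    Functor.isoWhiskerLeft _ e ≪≫ Localization.Lifting.iso (underWeq Y).Q (underWeq Y) _ (hoMap g)⟩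

end ModelStruct

theorem stmt15_general (C : Type*) [Category C] [M : ModelStruct C]
    [HasFiniteColimits C]
    (hproper : LeftProper C)
    {X Y : C} (f g : X ⟶ Y)
    (hfg : M.W.Q.map f = M.W.Q.map g)
    (Lf Lg : (M.W.inverseImage (Under.forget Y)).Localization ⥤
      (M.W.inverseImage (Under.forget X)).Localization)
    (αf : (M.W.inverseImage (Under.forget Y)).Q ⋙ Lf ⟶
      Under.map f ⋙ (M.W.inverseImage (Under.forget X)).Q)
    (αg : (M.W.inverseImage (Under.forget Y)).Q ⋙ Lg ⟶
      Under.map g ⋙ (M.W.inverseImage (Under.forget X)).Q)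
    [Lf.IsRightKanExtension αf] [Lg.IsRightKanExtension αg] :
    Nonempty (Lf ≅ Lg) ∧
    Nonempty ((M.W.inverseImage (Under.forget X)).Q.obj (Under.mk f) ≅
      (M.W.inverseImage (Under.forget X)).Q.obj (Under.mk g)) := by
  obtain ⟨e⟩ := ModelStruct.nonempty_iso_of_Q_map_eq hproper hfg
  refine ⟨⟨Lf.rightKanExtensionUniqueOfIso αf e Lg αg⟩, ⟨?_⟩⟩
  have hmk (h : X ⟶ Y) : Under.mk h ≅ (Under.map h).obj (Under.mk (𝟙 Y)) :=
    Under.isoMk (Iso.refl _)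
  exact (M.W.inverseImage (Under.forget X)).Q.mapIso (hmk f) ≪≫ e.app (Under.mk (𝟙 Y)) ≪≫
    ((M.W.inverseImage (Under.forget X)).Q.mapIso (hmk g)).symm

/-- Let `C` be a left proper model category and `f, g : X ⟶ Y` maps that become equal
in `Ho(C)`. Then any right Kan extensions `Lf*`, `Lg* : Ho(C^Y) ⥤ Ho(C^X)` of the
localized restriction functors along the localizations (i.e. the total left derived
functors of the restrictions `f*, g* : C^Y ⥤ C^X` between under-categories) are
isomorphic; in particular `(Y, f)` and `(Y, g)` become isomorphic in `Ho(C^X)`. -/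
theorem stmt15 (C : Type*) [Category C] [M : ModelStruct C]
    [HasFiniteLimits C] [HasFiniteColimits C]
    (hproper : LeftProper C)
    {X Y : C} (f g : X ⟶ Y)
    (hfg : M.W.Q.map f = M.W.Q.map g)
    (Lf Lg : (M.W.inverseImage (Under.forget Y)).Localization ⥤
      (M.W.inverseImage (Under.forget X)).Localization)
    (αf : (M.W.inverseImage (Under.forget Y)).Q ⋙ Lf ⟶
      Under.map f ⋙ (M.W.inverseImage (Under.forget X)).Q)
    (αg : (M.W.inverseImage (Under.forget Y)).Q ⋙ Lg ⟶
      Under.map g ⋙ (M.W.inverseImage (Under.forget X)).Q)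
    [Lf.IsRightKanExtension αf] [Lg.IsRightKanExtension αg] :
    Nonempty (Lf ≅ Lg) ∧
    Nonempty ((M.W.inverseImage (Under.forget X)).Q.obj (Under.mk f) ≅
      (M.W.inverseImage (Under.forget X)).Q.obj (Under.mk g)) :=
  stmt15_general C (M := M) hproper f g hfg Lf Lg αf αg
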